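/- Let Π be a reversible Markov kernel on a measurable space (X,𝓔) with finite reversing measure m. Let κ := inf{ |∂_Π A|_m / m(A) : A ∈ 𝓔, 0 < m(A) ≤ m(X)/2 } be the Cheeger constant, and let 1 − λ₂ := inf{ 𝓔₂(f) / ‖f‖²_{m,2} : f ∈ L²(X,m), ∫_X f dm = 0, f ≠ 0 } (this quantity equals 1 minus the supremum of the spectrum of the Markov operator restricted to the zero-average subspace). Then κ²/2 ≤ 1 − λ₂ ≤ 2κ. -/

import Mathlib

open MeasureTheory ProbabilityTheory ENNReal

noncomputable section

/-- The `m`-size of the boundary of `A` with respect to the Markov kernel `Π`: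
`|∂_Π A|_m = ∫_A Π(x, X∖A) dm(x)`. -/
def boundarySize {X : Type*} [MeasurableSpace X] (K : Kernel X X) (m : Measure X)
    (A : Set X) : ℝ :=
  (∫⁻ x in A, K x Aᶜ ∂m).toReal

/-- The Cheeger constant of the Markov kernel `Π` with respect to `m`:
`κ = inf { |∂_Π A|_m / m(A) : A measurable, 0 < m(A) ≤ m(X)/2 }`. -/
def cheegerConst {X : Type*} [MeasurableSpace X] (K : Kernel X X) (m : Measure X) : ℝ :=
  sInf { q : ℝ | ∃ A : Set X, MeasurableSet A ∧ 0 < m A ∧ m A ≤ m Set.univ / 2 ∧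
    q = boundarySize K m A / (m A).toReal }

/-- The `2`-Dirichlet energy `𝓔₂(f) = (1/2) ∫_{X×X} |f(x) − f(y)|² dμ(x,y)` where
`μ = m ⊗ₘ Π` is the measure on `X × X` determined by `μ(A×B) = ∫_A Π(x,B) dm(x)`. -/
def dirichletEnergy2 {X : Type*} [MeasurableSpace X] (K : Kernel X X) (m : Measure X)
    (f : X → ℝ) : ℝ :=
  (1 / 2) * ∫ p, (f p.1 - f p.2) ^ 2 ∂(m.compProd K)

/-- `1 − λ₂`, the infimum of the Rayleigh quotients `𝓔₂(f)/‖f‖²_{m,2}` over nonzero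
zero-average functions `f ∈ L²(X,m)`. -/
def spectralGap {X : Type*} [MeasurableSpace X] (K : Kernel X X) (m : Measure X) : ℝ :=
  sInf { q : ℝ | ∃ f : X → ℝ, MemLp f 2 m ∧ (∫ x, f x ∂m) = 0 ∧ (0 < ∫ x, f x ^ 2 ∂m) ∧
    q = dirichletEnergy2 K m f / ∫ x, f x ^ 2 ∂m }

/-!
For the upper bound, the centred indicator `1_A - m(A)/m(X)` of a set with
`0 < m(A) ≤ m(X)/2` is an admissible test function; by reversibility its Dirichlet energy is
`|∂_Π A|_m`, and its squared norm is `m(A) (1 - m(A)/m(X)) ≥ m(A)/2`.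

For the lower bound, subtract a median `c` of `f`: as `f` has mean zero this does not decrease
`∫ f²`, and the positive and negative parts `h` of `f - c` have all level sets `{h > t}`, `t > 0`,
of measure at most `m(X)/2`. For such `h`, the co-area formula and the Cheeger inequality on the
level sets of `h²` give `κ ∫ h² ≤ ∫ (h(x)² - h(y)²)⁺ dμ = ½ ∫ |h(x)² - h(y)²| dμ`, the equality
by symmetry of `μ`. The pointwise bound `κ |a² - b²| ≤ (a - b)² + κ² (a² + b²) / 2` turns this
into `κ² ∫ h² ≤ 2 𝓔₂(h)`, and `𝓔₂((f - c)⁺) + 𝓔₂((f - c)⁻) ≤ 𝓔₂(f)` adds up the two parts.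
-/

open Set Filter Topology

section

variable {X : Type*} [MeasurableSpace X] {K : Kernel X X} {m : Measure X}

namespace ProbabilityTheory.Kernel

lemma isReversible_of_integral_mul_comm [IsFiniteMeasure m] [IsFiniteKernel K]
    (hrev : ∀ f g : X → ℝ, Measurable f → Measurable g →
      (∃ C, ∀ x, |f x| ≤ C) → (∃ C, ∀ x, |g x| ≤ C) →
      ∫ x, f x * (∫ y, g y ∂(K x)) ∂m = ∫ x, (∫ y, f y ∂(K x)) * g x ∂m) :
    K.IsReversible m := by
  have indicator_bdd : ∀ A : Set X, ∃ C, ∀ x, |A.indicator (1 : X → ℝ) x| ≤ C := fun A =>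
    ⟨1, fun x => by by_cases hx : x ∈ A <;> simp [hx]⟩
  have flow_eq : ∀ {A B : Set X}, MeasurableSet A → MeasurableSet B →
      ∫ x, A.indicator 1 x * (∫ y, B.indicator 1 y ∂(K x)) ∂m
        = (∫⁻ x in A, K x B ∂m).toReal := by
    intro A B hA hB
    have : (fun x => A.indicator (1 : X → ℝ) x * ∫ y, B.indicator 1 y ∂(K x))
        = A.indicator (fun x => (K x B).toReal) := by
      ext x; by_cases hx : x ∈ A <;> simp [hx, integral_indicator_one hB, measureReal_def]
    rw [this, integral_indicator hA, integral_toReal (K.measurable_coe hB).aemeasurable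
      (ae_of_all _ fun x => measure_lt_top _ _)]
  intro A B hA hB
  have h := hrev _ _ (measurable_one.indicator hA) (measurable_one.indicator hB)
    (indicator_bdd A) (indicator_bdd B)
  simp_rw [mul_comm _ (B.indicator 1 _)] at h
  rw [flow_eq hA hB, flow_eq hB hA] at h
  rwa [← Measure.compProd_apply_prod hA hB, ← Measure.compProd_apply_prod hB hA,
    toReal_eq_toReal_iff' (measure_ne_top _ _) (measure_ne_top _ _),
    Measure.compProd_apply_prod hA hB, Measure.compProd_apply_prod hB hA] at h

lemma IsReversible.compProd_apply_prod_comm [SFinite m] [IsSFiniteKernel K]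
    (hK : K.IsReversible m) {A B : Set X} (hA : MeasurableSet A) (hB : MeasurableSet B) :
    (m ⊗ₘ K) (A ×ˢ B) = (m ⊗ₘ K) (B ×ˢ A) := by
  rw [Measure.compProd_apply_prod hA hB, Measure.compProd_apply_prod hB hA, hK hA hB]

lemma IsReversible.measurePreserving_swap [IsFiniteMeasure m] [IsFiniteKernel K]
    (hK : K.IsReversible m) : MeasurePreserving Prod.swap (m ⊗ₘ K) (m ⊗ₘ K) := by
  refine ⟨measurable_swap, Measure.ext_prod fun {A B} hA hB => ?_⟩
  rw [Measure.map_apply measurable_swap (hA.prod hB), preimage_swap_prod,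
    hK.compProd_apply_prod_comm hB hA]

lemma IsReversible.measurePreserving_snd [SFinite m] [IsMarkovKernel K]
    (hK : K.IsReversible m) : MeasurePreserving Prod.snd (m ⊗ₘ K) m :=
  ⟨measurable_snd, (Measure.snd_compProd m K).trans hK.invariant⟩

end ProbabilityTheory.Kernel

lemma measurePreserving_fst_compProd [SFinite m] [IsMarkovKernel K] :
    MeasurePreserving Prod.fst (m ⊗ₘ K) m :=
  ⟨measurable_fst, Measure.fst_compProd m K⟩

/-- Co-area formula: `(u x - u y)⁺` is the length of the set of levels `t` with
`u y ≤ t < u x`. -/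
lemma lintegral_ofReal_sub_eq_lintegral_measure_prod {μ : Measure (X × X)} [SFinite μ]
    {u : X → ℝ} (hu : Measurable u) :
    ∫⁻ p, ENNReal.ofReal (u p.1 - u p.2) ∂μ
      = ∫⁻ t, μ ({x | t < u x} ×ˢ {x | t < u x}ᶜ) := by
  set S : Set (ℝ × (X × X)) := {q | q.1 < u q.2.1} ∩ {q | u q.2.2 ≤ q.1}
  have hS : MeasurableSet S :=
    (measurableSet_lt measurable_fst (by fun_prop)).inter
      (measurableSet_le (by fun_prop) measurable_fst)
  have hlevel : ∀ t, MeasurableSet {x | t < u x} := fun t => measurableSet_lt measurable_const hu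
  calc ∫⁻ p, ENNReal.ofReal (u p.1 - u p.2) ∂μ
      = ∫⁻ p, (∫⁻ t, S.indicator 1 (t, p)) ∂μ := by
        refine lintegral_congr fun p => ?_
        rw [← Real.volume_Ico, ← lintegral_indicator_one measurableSet_Ico]
        congr 1 with t
        simp [S, indicator_apply, and_comm]
    _ = ∫⁻ t, ∫⁻ p, S.indicator 1 (t, p) ∂μ :=
        (lintegral_lintegral_swap (f := fun t p => S.indicator 1 (t, p))
          (measurable_one.indicator hS).aemeasurable).symm
    _ = ∫⁻ t, μ ({x | t < u x} ×ˢ {x | t < u x}ᶜ) := by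
        refine lintegral_congr fun t => ?_
        rw [← lintegral_indicator_one ((hlevel t).prod (hlevel t).compl)]
        congr 1 with p
        simp [S, indicator_apply]

lemma lintegral_ofReal_abs_sub_eq_two_mul {μ : Measure (X × X)}
    (hμ : MeasurePreserving Prod.swap μ μ) {u : X → ℝ} (hu : Measurable u) :
    ∫⁻ p, ENNReal.ofReal |u p.1 - u p.2| ∂μ = 2 * ∫⁻ p, ENNReal.ofReal (u p.1 - u p.2) ∂μ := by
  have hswap : ∫⁻ p, ENNReal.ofReal (u p.2 - u p.1) ∂μ = ∫⁻ p, ENNReal.ofReal (u p.1 - u p.2) ∂μ :=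
    hμ.lintegral_comp_emb MeasurableEquiv.prodComm.measurableEmbedding
      (fun p => ENNReal.ofReal (u p.1 - u p.2))
  have habs : ∀ a b : ℝ,
      ENNReal.ofReal |a - b| = ENNReal.ofReal (a - b) + ENNReal.ofReal (b - a) := by
    intro a b
    rcases le_total a b with h | h
    · rw [abs_of_nonpos (sub_nonpos.2 h), ofReal_of_nonpos (sub_nonpos.2 h), zero_add, neg_sub]
    · rw [abs_of_nonneg (sub_nonneg.2 h), ofReal_of_nonpos (sub_nonpos.2 h), add_zero]
  simp_rw [habs]
  rw [lintegral_add_right _ (by fun_prop), hswap, two_mul]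

lemma exists_median {μ : Measure X} [IsFiniteMeasure μ] {f : X → ℝ} (hf : Measurable f) :
    ∃ c, ∀ s > 0, μ {x | c + s < f x} ≤ μ univ / 2 ∧ μ {x | f x < c - s} ≤ μ univ / 2 := by
  rcases eq_zero_or_neZero μ with rfl | hμ
  · exact ⟨0, fun _ _ => by simp⟩
  have hhalf : μ univ / 2 < μ univ :=
    ENNReal.half_lt_self (NeZero.ne _) (measure_ne_top μ _)
  have hanti : Antitone fun t : ℝ => {x | t < f x} :=
    fun s t hst x hx => lt_of_le_of_lt hst hx
  have hmeas : ∀ t : ℝ, MeasurableSet {x | t < f x} := fun t => measurableSet_lt measurable_const hf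
  have htop : Tendsto (fun t : ℝ => μ {x | t < f x}) atTop (𝓝 0) := by
    have := tendsto_measure_iInter_atTop (μ := μ) (fun t => (hmeas t).nullMeasurableSet) hanti
      ⟨0, measure_ne_top μ _⟩
    rwa [show ⋂ t : ℝ, {x | t < f x} = ∅ from
      iInter_eq_empty_iff.2 fun x => ⟨f x, lt_irrefl (f x)⟩, measure_empty] at this
  have hbot : Tendsto (fun t : ℝ => μ {x | t < f x}) atBot (𝓝 (μ univ)) := by
    have := tendsto_measure_iUnion_atBot (μ := μ) hanti
    rwa [show ⋃ t : ℝ, {x | t < f x} = univ from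
      iUnion_eq_univ_iff.2 fun x => ⟨f x - 1, sub_one_lt (f x)⟩] at this
  set T := {t : ℝ | μ {x | t < f x} ≤ μ univ / 2}
  have hT : T.Nonempty := ((htop.eventually (ge_mem_nhds (ENNReal.half_pos (NeZero.ne _)))).exists)
  obtain ⟨t₀, ht₀⟩ := (hbot.eventually (lt_mem_nhds hhalf)).exists_forall_of_atBot
  have hTbdd : BddBelow T := ⟨t₀, fun t ht => not_lt.1 fun hlt => (ht₀ t hlt.le).not_ge ht⟩
  refine ⟨sInf T, fun s hs => ⟨?_, ?_⟩⟩
  · obtain ⟨t, htT, hts⟩ := exists_lt_of_csInf_lt hT (lt_add_of_pos_right (sInf T) hs)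
    exact (measure_mono fun x hx => lt_trans hts hx).trans htT
  · have hout : sInf T - s ∉ T := fun hmem =>
      (csInf_le hTbdd hmem).not_gt (sub_lt_self _ hs)
    calc μ {x | f x < sInf T - s} ≤ μ {x | sInf T - s < f x}ᶜ :=
          measure_mono fun x (hx : f x < _) => not_lt.2 hx.le
      _ ≤ μ univ - μ univ / 2 := by
          rw [measure_compl (hmeas _) (measure_ne_top μ _)]
          exact tsub_le_tsub_left (not_le.1 hout).le _
      _ = μ univ / 2 := ENNReal.sub_half (measure_ne_top μ _)

lemma sq_max_sub_max_add_sq_max_neg_sub_max_neg_le (a b : ℝ) :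
    (max a 0 - max b 0) ^ 2 + (max (-a) 0 - max (-b) 0) ^ 2 ≤ (a - b) ^ 2 := by
  rcases le_total a 0 with ha | ha <;> rcases le_total b 0 with hb | hb <;>
    simp only [max_eq_left, max_eq_right, ha, hb, neg_nonneg, neg_nonpos] <;> nlinarith

lemma integral_sq_le_integral_sub_const_sq {μ : Measure X} [IsFiniteMeasure μ] {f : X → ℝ}
    (hf : MemLp f 2 μ) (h0 : ∫ x, f x ∂μ = 0) (c : ℝ) :
    ∫ x, f x ^ 2 ∂μ ≤ ∫ x, (f x - c) ^ 2 ∂μ := by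
  have hint : Integrable f μ := hf.integrable one_le_two
  have hexpand : ∫ x, (f x - c) ^ 2 ∂μ = ∫ x, f x ^ 2 ∂μ + c ^ 2 * μ.real univ := by
    have hlin : Integrable (fun x => 2 * f x * c) μ := (hint.const_mul 2).mul_const c
    simp_rw [sub_sq]
    rw [integral_add (f := fun x => f x ^ 2 - 2 * f x * c) (hf.integrable_sq.sub hlin)
        (integrable_const _),
      integral_sub hf.integrable_sq hlin, integral_mul_const, integral_const_mul, h0,
      integral_const, smul_eq_mul]
    ring
  rw [hexpand]
  exact le_add_of_nonneg_right (by positivity)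

lemma measure_pos_setOf_pos_of_integral_eq_zero {μ : Measure X} {f : X → ℝ}
    (hf : Integrable f μ) (h0 : ∫ x, f x ∂μ = 0) (hne : ¬ f =ᵐ[μ] 0) :
    0 < μ {x | 0 < f x} := by
  refine pos_iff_ne_zero.2 fun hzero => hne ?_
  have hnonpos : ∀ᵐ x ∂μ, 0 ≤ -f x := by
    rw [ae_iff]
    simpa using hzero
  filter_upwards [(integral_eq_zero_iff_of_nonneg_ae hnonpos hf.neg).1
    (by rw [integral_neg, h0, neg_zero])] with x hx
  exact neg_eq_zero.1 hx

lemma measure_le_half_or_measure_le_half {μ : Measure X} {s t : Set X} (ht : MeasurableSet t)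
    (hst : Disjoint s t) : μ s ≤ μ univ / 2 ∨ μ t ≤ μ univ / 2 := by
  by_contra! h
  have := ENNReal.add_lt_add h.1 h.2
  rw [ENNReal.add_halves, ← measure_union hst ht] at this
  exact (measure_mono (subset_univ _)).not_gt this

lemma exists_measurableSet_le_half_of_integral_eq_zero {μ : Measure X} {f : X → ℝ}
    (hm : Measurable f) (hf : Integrable f μ) (h0 : ∫ x, f x ∂μ = 0) (hne : ¬ f =ᵐ[μ] 0) :
    ∃ A, MeasurableSet A ∧ 0 < μ A ∧ μ A ≤ μ univ / 2 := by
  have hpos := measure_pos_setOf_pos_of_integral_eq_zero hf h0 hne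
  have hneg := measure_pos_setOf_pos_of_integral_eq_zero hf.neg
    (by simp only [Pi.neg_apply, integral_neg, h0, neg_zero])
    fun h => hne (by filter_upwards [h] with x hx; simpa using hx)
  have hdisj : Disjoint {x | 0 < f x} {x | 0 < -f x} :=
    disjoint_left.2 fun x (hx : 0 < f x) (hx' : 0 < -f x) => by linarith
  rcases measure_le_half_or_measure_le_half (measurableSet_lt measurable_const hm.neg) hdisj
    with h | h
  · exact ⟨_, measurableSet_lt measurable_const hm, hpos, h⟩
  · exact ⟨_, measurableSet_lt measurable_const hm.neg, hneg, h⟩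

lemma measure_setOf_lt_sq_le {μ : Measure X} {h : X → ℝ} (h0 : 0 ≤ h) {c : ℝ≥0∞}
    (hlevel : ∀ t > 0, μ {x | t < h x} ≤ c) : ∀ t > 0, μ {x | t < h x ^ 2} ≤ c := by
  refine fun t ht => (measure_mono fun x hx => ?_).trans (hlevel √t (Real.sqrt_pos.2 ht))
  have hx0 : 0 < h x := (h0 x).lt_of_ne fun hzero => by
    simp only [mem_ofPred_eq, ← hzero, Pi.zero_apply] at hx; linarith
  exact (Real.sqrt_lt' hx0).2 hx

lemma ofReal_mul_abs_sq_sub_sq_le {κ : ℝ} (hκ : 0 ≤ κ) (a b : ℝ) :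
    ENNReal.ofReal κ * ENNReal.ofReal |a ^ 2 - b ^ 2|
      ≤ ENNReal.ofReal ((a - b) ^ 2)
        + ENNReal.ofReal κ ^ 2 / 2 * (ENNReal.ofReal (a ^ 2) + ENNReal.ofReal (b ^ 2)) := by
  have amgm := two_mul_le_add_sq |a - b| (κ * |a + b| / 2)
  rw [sq_abs, div_pow, mul_pow, sq_abs] at amgm
  have hreal : κ * |a ^ 2 - b ^ 2| ≤ (a - b) ^ 2 + κ ^ 2 / 2 * (a ^ 2 + b ^ 2) := by
    rw [sq_sub_sq, abs_mul, mul_comm |a + b|]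
    nlinarith [sq_nonneg (a - b)]
  rw [← ofReal_mul hκ, ← ofReal_pow hκ, ← ofReal_ofNat 2, ← ofReal_div_of_pos two_pos,
    ← ofReal_add (sq_nonneg _) (sq_nonneg _), ← ofReal_mul (by positivity),
    ← ofReal_add (sq_nonneg _) (by positivity)]
  exact ofReal_le_ofReal hreal


lemma boundarySize_eq_toReal_compProd [SFinite m] [IsSFiniteKernel K] {A : Set X}
    (hA : MeasurableSet A) : boundarySize K m A = ((m ⊗ₘ K) (A ×ˢ Aᶜ)).toReal := by
  rw [boundarySize, Measure.compProd_apply_prod hA hA.compl]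

def cheegerRatios (K : Kernel X X) (m : Measure X) : Set ℝ :=
  { q : ℝ | ∃ A : Set X, MeasurableSet A ∧ 0 < m A ∧ m A ≤ m Set.univ / 2 ∧
    q = boundarySize K m A / (m A).toReal }

lemma cheegerConst_eq_sInf : cheegerConst K m = sInf (cheegerRatios K m) := rfl

lemma cheegerRatios_nonneg {q : ℝ} (hq : q ∈ cheegerRatios K m) : 0 ≤ q := by
  obtain ⟨A, -, -, -, rfl⟩ := hq
  exact div_nonneg toReal_nonneg toReal_nonneg

lemma cheegerConst_nonneg : 0 ≤ cheegerConst K m :=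
  Real.sInf_nonneg fun _ => cheegerRatios_nonneg

lemma cheegerConst_le {A : Set X} (hA : MeasurableSet A) (hpos : 0 < m A)
    (hhalf : m A ≤ m univ / 2) : cheegerConst K m ≤ boundarySize K m A / (m A).toReal :=
  csInf_le ⟨0, fun _ => cheegerRatios_nonneg⟩ ⟨A, hA, hpos, hhalf, rfl⟩

lemma ofReal_cheegerConst_mul_le_compProd [IsFiniteMeasure m] [IsSFiniteKernel K] {A : Set X}
    (hA : MeasurableSet A) (hhalf : m A ≤ m univ / 2) :
    ENNReal.ofReal (cheegerConst K m) * m A ≤ (m ⊗ₘ K) (A ×ˢ Aᶜ) := by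
  rcases eq_zero_or_pos (m A) with hzero | hpos
  · simp [hzero]
  have hAreal : 0 < (m A).toReal := toReal_pos hpos.ne' (measure_ne_top m A)
  have hreal := (le_div_iff₀ hAreal).mp (cheegerConst_le (K := K) hA hpos hhalf)
  rw [boundarySize_eq_toReal_compProd hA] at hreal
  calc ENNReal.ofReal (cheegerConst K m) * m A
      = ENNReal.ofReal (cheegerConst K m * (m A).toReal) := by
        rw [ofReal_mul cheegerConst_nonneg, ofReal_toReal (measure_ne_top m A)]
    _ ≤ (m ⊗ₘ K) (A ×ˢ Aᶜ) := ofReal_le_of_le_toReal hreal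

lemma ofReal_cheegerConst_mul_lintegral_le [IsFiniteMeasure m] [IsSFiniteKernel K] {u : X → ℝ}
    (hu : Measurable u) (hu0 : 0 ≤ u) (hlevel : ∀ t > 0, m {x | t < u x} ≤ m univ / 2) :
    ENNReal.ofReal (cheegerConst K m) * ∫⁻ x, ENNReal.ofReal (u x) ∂m
      ≤ ∫⁻ p, ENNReal.ofReal (u p.1 - u p.2) ∂(m ⊗ₘ K) := by
  rw [lintegral_eq_lintegral_meas_lt m (ae_of_all _ hu0) hu.aemeasurable,
    ← lintegral_const_mul' _ _ ofReal_ne_top, lintegral_ofReal_sub_eq_lintegral_measure_prod hu]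
  calc ∫⁻ t in Ioi 0, ENNReal.ofReal (cheegerConst K m) * m {x | t < u x}
      ≤ ∫⁻ t in Ioi 0, (m ⊗ₘ K) ({x | t < u x} ×ˢ {x | t < u x}ᶜ) :=
        setLIntegral_mono' measurableSet_Ioi fun t ht =>
          ofReal_cheegerConst_mul_le_compProd (measurableSet_lt measurable_const hu) (hlevel t ht)
    _ ≤ _ := setLIntegral_le_lintegral _ _

lemma integrable_sub_sq_compProd [SFinite m] [IsMarkovKernel K] (hK : K.IsReversible m)
    {f : X → ℝ} (hf : MemLp f 2 m) :
    Integrable (fun p : X × X => (f p.1 - f p.2) ^ 2) (m ⊗ₘ K) :=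
  ((hf.comp_measurePreserving measurePreserving_fst_compProd).sub
    (hf.comp_measurePreserving hK.measurePreserving_snd)).integrable_sq

lemma dirichletEnergy2_sub_const (f : X → ℝ) (c : ℝ) :
    dirichletEnergy2 K m (fun x => f x - c) = dirichletEnergy2 K m f := by
  simp [dirichletEnergy2]

lemma dirichletEnergy2_congr_ae [SFinite m] [IsMarkovKernel K] (hK : K.IsReversible m)
    {f g : X → ℝ} (hfg : f =ᵐ[m] g) : dirichletEnergy2 K m f = dirichletEnergy2 K m g := by
  have hfst : MeasurePreserving Prod.fst (m ⊗ₘ K) m := measurePreserving_fst_compProd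
  have h1 := hfst.quasiMeasurePreserving.ae_eq_comp hfg
  have h2 := hK.measurePreserving_snd.quasiMeasurePreserving.ae_eq_comp hfg
  unfold dirichletEnergy2
  congr 1
  refine integral_congr_ae ?_
  filter_upwards [h1, h2] with p hp1 hp2
  simp only [Function.comp_apply] at hp1 hp2
  rw [hp1, hp2]

lemma dirichletEnergy2_max_zero_add_le [SFinite m] [IsMarkovKernel K] (hK : K.IsReversible m)
    {f : X → ℝ} (hf : MemLp f 2 m) :
    dirichletEnergy2 K m (fun x => max (f x) 0) + dirichletEnergy2 K m (fun x => max (-f x) 0)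
      ≤ dirichletEnergy2 K m f := by
  unfold dirichletEnergy2
  rw [← mul_add, ← integral_add (integrable_sub_sq_compProd hK hf.pos_part)
    (integrable_sub_sq_compProd hK hf.neg_part)]
  refine mul_le_mul_of_nonneg_left (integral_mono ((integrable_sub_sq_compProd hK hf.pos_part).add
    (integrable_sub_sq_compProd hK hf.neg_part)) (integrable_sub_sq_compProd hK hf) fun p => ?_)
    (by norm_num)
  exact sq_max_sub_max_add_sq_max_neg_sub_max_neg_le _ _

def rayleighQuotients (K : Kernel X X) (m : Measure X) : Set ℝ :=
  { q : ℝ | ∃ f : X → ℝ, MemLp f 2 m ∧ (∫ x, f x ∂m) = 0 ∧ (0 < ∫ x, f x ^ 2 ∂m) ∧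
    q = dirichletEnergy2 K m f / ∫ x, f x ^ 2 ∂m }

lemma spectralGap_eq_sInf : spectralGap K m = sInf (rayleighQuotients K m) := rfl

lemma dirichletEnergy2_nonneg (f : X → ℝ) : 0 ≤ dirichletEnergy2 K m f :=
  mul_nonneg (by norm_num) (integral_nonneg fun _ => sq_nonneg _)

lemma rayleighQuotients_nonneg {q : ℝ} (hq : q ∈ rayleighQuotients K m) : 0 ≤ q := by
  obtain ⟨f, -, -, hpos, rfl⟩ := hq
  exact div_nonneg (dirichletEnergy2_nonneg f) hpos.le

lemma spectralGap_le {q : ℝ} (hq : q ∈ rayleighQuotients K m) : spectralGap K m ≤ q :=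
  csInf_le ⟨0, fun _ => rayleighQuotients_nonneg⟩ hq

lemma exists_measurable_of_mem_rayleighQuotients [SFinite m] [IsMarkovKernel K]
    (hK : K.IsReversible m) {q : ℝ} (hq : q ∈ rayleighQuotients K m) :
    ∃ f : X → ℝ, Measurable f ∧ MemLp f 2 m ∧ (∫ x, f x ∂m) = 0 ∧ (0 < ∫ x, f x ^ 2 ∂m) ∧
      q = dirichletEnergy2 K m f / ∫ x, f x ^ 2 ∂m := by
  obtain ⟨f, hf, h0, hpos, rfl⟩ := hq
  have hae := hf.aestronglyMeasurable.ae_eq_mk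
  have hsq : ∫ x, f x ^ 2 ∂m = ∫ x, hf.aestronglyMeasurable.mk f x ^ 2 ∂m :=
    integral_congr_ae (hae.fun_comp (· ^ 2))
  refine ⟨_, hf.aestronglyMeasurable.measurable_mk, hf.ae_eq hae, ?_, hsq ▸ hpos, ?_⟩
  · rwa [← integral_congr_ae hae]
  · rw [dirichletEnergy2_congr_ae hK hae, hsq]

lemma dirichletEnergy2_indicator_one [IsFiniteMeasure m] [IsFiniteKernel K]
    (hK : K.IsReversible m) {A : Set X} (hA : MeasurableSet A) :
    dirichletEnergy2 K m (A.indicator 1) = boundarySize K m A := by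
  have hsplit : ∀ p : X × X, (A.indicator (1 : X → ℝ) p.1 - A.indicator 1 p.2) ^ 2
      = (A ×ˢ Aᶜ).indicator 1 p + (Aᶜ ×ˢ A).indicator 1 p := by
    rintro ⟨x, y⟩
    by_cases hx : x ∈ A <;> by_cases hy : y ∈ A <;> simp [hx, hy]
  simp_rw [dirichletEnergy2, hsplit]
  rw [integral_add ((integrable_const 1).indicator (hA.prod hA.compl))
      ((integrable_const 1).indicator (hA.compl.prod hA)),
    integral_indicator_one (hA.prod hA.compl), integral_indicator_one (hA.compl.prod hA),
    measureReal_def, measureReal_def, ← hK.compProd_apply_prod_comm hA hA.compl,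
    boundarySize_eq_toReal_compProd hA]
  ring

def centeredIndicator (m : Measure X) (A : Set X) : X → ℝ :=
  fun x => A.indicator 1 x - m.real A / m.real univ

lemma memLp_centeredIndicator [IsFiniteMeasure m] {A : Set X} (hA : MeasurableSet A) :
    MemLp (centeredIndicator m A) 2 m :=
  (memLp_indicator_const 2 hA 1 (Or.inr (measure_ne_top m A))).sub (memLp_const _)

lemma integral_centeredIndicator [IsFiniteMeasure m] {A : Set X} (hA : MeasurableSet A) :
    ∫ x, centeredIndicator m A x ∂m = 0 := by
  unfold centeredIndicator
  rw [integral_sub ((integrable_const 1).indicator hA) (integrable_const _),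
    integral_indicator_one hA, MeasureTheory.integral_const, smul_eq_mul]
  rcases eq_zero_or_neZero m with rfl | _
  · simp
  · rw [mul_div_cancel₀ _ measureReal_univ_ne_zero, sub_self]

lemma integral_centeredIndicator_sq [IsFiniteMeasure m] {A : Set X} (hA : MeasurableSet A) :
    ∫ x, centeredIndicator m A x ^ 2 ∂m = m.real A * (1 - m.real A / m.real univ) := by
  have hpt : ∀ x, centeredIndicator m A x ^ 2
      = A.indicator (fun _ => 1 - 2 * (m.real A / m.real univ)) x
        + (m.real A / m.real univ) ^ 2 := by
    intro x
    by_cases hx : x ∈ A <;> simp [centeredIndicator, hx]; ring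
  simp_rw [hpt]
  rw [integral_add ((integrable_const _).indicator hA) (integrable_const _),
    integral_indicator_const _ hA, MeasureTheory.integral_const, smul_eq_mul, smul_eq_mul]
  rcases eq_zero_or_neZero m with rfl | _
  · simp
  · field_simp [measureReal_univ_ne_zero]
    ring

lemma half_measureReal_le_integral_centeredIndicator_sq [IsFiniteMeasure m] {A : Set X}
    (hA : MeasurableSet A) (hpos : 0 < m A) (hhalf : m A ≤ m univ / 2) :
    m.real A / 2 ≤ ∫ x, centeredIndicator m A x ^ 2 ∂m := by
  have hhalf_real : m.real A ≤ m.real univ / 2 := by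
    simpa [measureReal_def, ENNReal.toReal_div] using
      ENNReal.toReal_mono (div_ne_top (measure_ne_top m _) two_ne_zero) hhalf
  have hApos : 0 < m.real A := toReal_pos hpos.ne' (measure_ne_top m A)
  have hratio : m.real A / m.real univ ≤ 1 / 2 := by
    rw [div_le_iff₀ (by linarith)]; linarith
  rw [integral_centeredIndicator_sq hA]
  nlinarith

lemma dirichletEnergy2_centeredIndicator [IsFiniteMeasure m] [IsFiniteKernel K]
    (hK : K.IsReversible m) {A : Set X} (hA : MeasurableSet A) :
    dirichletEnergy2 K m (centeredIndicator m A) = boundarySize K m A := by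
  unfold centeredIndicator
  rw [dirichletEnergy2_sub_const, dirichletEnergy2_indicator_one hK hA]

lemma centeredIndicator_mem_rayleighQuotients [IsFiniteMeasure m] {A : Set X}
    (hA : MeasurableSet A) (hpos : 0 < m A) (hhalf : m A ≤ m univ / 2) :
    dirichletEnergy2 K m (centeredIndicator m A) / ∫ x, centeredIndicator m A x ^ 2 ∂m
      ∈ rayleighQuotients K m :=
  ⟨_, memLp_centeredIndicator hA, integral_centeredIndicator hA,
    (half_pos (toReal_pos hpos.ne' (measure_ne_top m A))).trans_le
      (half_measureReal_le_integral_centeredIndicator_sq hA hpos hhalf), rfl⟩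

lemma spectralGap_le_two_mul_boundarySize_div [IsFiniteMeasure m] [IsFiniteKernel K]
    (hK : K.IsReversible m) {A : Set X} (hA : MeasurableSet A) (hpos : 0 < m A)
    (hhalf : m A ≤ m univ / 2) :
    spectralGap K m ≤ 2 * (boundarySize K m A / (m A).toReal) :=
  calc spectralGap K m
      ≤ dirichletEnergy2 K m (centeredIndicator m A) / ∫ x, centeredIndicator m A x ^ 2 ∂m :=
        spectralGap_le (centeredIndicator_mem_rayleighQuotients hA hpos hhalf)
    _ ≤ boundarySize K m A / (m.real A / 2) := by
        rw [dirichletEnergy2_centeredIndicator hK hA]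
        gcongr
        · exact toReal_nonneg
        · exact half_pos (toReal_pos hpos.ne' (measure_ne_top m A))
        · exact half_measureReal_le_integral_centeredIndicator_sq hA hpos hhalf
    _ = 2 * (boundarySize K m A / (m A).toReal) := by
        rw [measureReal_def]; field_simp

lemma ofReal_cheegerConst_sq_mul_lintegral_le [IsFiniteMeasure m] [IsMarkovKernel K]
    (hK : K.IsReversible m) {h : X → ℝ} (hm : Measurable h) (h0 : 0 ≤ h)
    (hL2 : MemLp h 2 m) (hlevel : ∀ t > 0, m {x | t < h x} ≤ m univ / 2) :
    ENNReal.ofReal (cheegerConst K m) ^ 2 * ∫⁻ x, ENNReal.ofReal (h x ^ 2) ∂m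
      ≤ ∫⁻ p, ENNReal.ofReal ((h p.1 - h p.2) ^ 2) ∂(m ⊗ₘ K) := by
  set κ := ENNReal.ofReal (cheegerConst K m)
  set I := ∫⁻ x, ENNReal.ofReal (h x ^ 2) ∂m
  have hsq : Measurable fun x => ENNReal.ofReal (h x ^ 2) := by fun_prop
  have hflow : κ * I ≤ ∫⁻ p, ENNReal.ofReal (h p.1 ^ 2 - h p.2 ^ 2) ∂(m ⊗ₘ K) :=
    ofReal_cheegerConst_mul_lintegral_le (hm.pow_const 2) (fun x => sq_nonneg _)
      (measure_setOf_lt_sq_le h0 hlevel)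
  have hfin : κ ^ 2 * I ≠ ⊤ :=
    mul_ne_top (pow_ne_top ofReal_ne_top) hL2.integrable_sq.lintegral_lt_top.ne
  refine ENNReal.le_of_add_le_add_right hfin ?_
  calc κ ^ 2 * I + κ ^ 2 * I = κ * (2 * (κ * I)) := by ring
    _ ≤ κ * (2 * ∫⁻ p, ENNReal.ofReal (h p.1 ^ 2 - h p.2 ^ 2) ∂(m ⊗ₘ K)) := by gcongr
    _ = ∫⁻ p, κ * ENNReal.ofReal |h p.1 ^ 2 - h p.2 ^ 2| ∂(m ⊗ₘ K) := by
        rw [← lintegral_ofReal_abs_sub_eq_two_mul hK.measurePreserving_swap (hm.pow_const 2),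
          lintegral_const_mul' _ _ ofReal_ne_top]
    _ ≤ ∫⁻ p, (ENNReal.ofReal ((h p.1 - h p.2) ^ 2)
          + κ ^ 2 / 2 * (ENNReal.ofReal (h p.1 ^ 2) + ENNReal.ofReal (h p.2 ^ 2))) ∂(m ⊗ₘ K) :=
        lintegral_mono fun p => ofReal_mul_abs_sq_sub_sq_le cheegerConst_nonneg _ _
    _ = ∫⁻ p, ENNReal.ofReal ((h p.1 - h p.2) ^ 2) ∂(m ⊗ₘ K) + κ ^ 2 / 2 * (I + I) := by
        rw [lintegral_add_left (by fun_prop),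
          lintegral_const_mul' _ _ (div_ne_top (pow_ne_top ofReal_ne_top) two_ne_zero),
          lintegral_add_left (by fun_prop), measurePreserving_fst_compProd.lintegral_comp hsq,
          hK.measurePreserving_snd.lintegral_comp hsq]
    _ = ∫⁻ p, ENNReal.ofReal ((h p.1 - h p.2) ^ 2) ∂(m ⊗ₘ K) + κ ^ 2 * I := by
        rw [← two_mul, ← mul_assoc, ENNReal.div_mul_cancel two_ne_zero ofNat_ne_top]

lemma cheegerConst_sq_mul_integral_sq_le_of_levelSets [IsFiniteMeasure m] [IsMarkovKernel K]
    (hK : K.IsReversible m) {h : X → ℝ} (hm : Measurable h) (h0 : 0 ≤ h) (hL2 : MemLp h 2 m)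
    (hlevel : ∀ t > 0, m {x | t < h x} ≤ m univ / 2) :
    cheegerConst K m ^ 2 * ∫ x, h x ^ 2 ∂m ≤ 2 * dirichletEnergy2 K m h := by
  have hE := ofReal_cheegerConst_sq_mul_lintegral_le hK hm h0 hL2 hlevel
  rw [← ofReal_integral_eq_lintegral_ofReal hL2.integrable_sq (ae_of_all _ fun _ => sq_nonneg _),
    ← ofReal_integral_eq_lintegral_ofReal (integrable_sub_sq_compProd hK hL2)
      (ae_of_all _ fun _ => sq_nonneg _),
    ← ofReal_pow cheegerConst_nonneg, ← ofReal_mul (sq_nonneg _),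
    ofReal_le_ofReal_iff (integral_nonneg fun _ => sq_nonneg _)] at hE
  rw [dirichletEnergy2]
  linarith

lemma cheegerConst_sq_mul_integral_sub_sq_le [IsFiniteMeasure m] [IsMarkovKernel K]
    (hK : K.IsReversible m) {f : X → ℝ} (hm : Measurable f) (hL2 : MemLp f 2 m) {c : ℝ}
    (hc : ∀ s > 0, m {x | c + s < f x} ≤ m univ / 2 ∧ m {x | f x < c - s} ≤ m univ / 2) :
    cheegerConst K m ^ 2 * ∫ x, (f x - c) ^ 2 ∂m ≤ 2 * dirichletEnergy2 K m f := by
  have hg : MemLp (fun x => f x - c) 2 m := hL2.sub (memLp_const c)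
  have hpos := cheegerConst_sq_mul_integral_sq_le_of_levelSets hK
    ((hm.sub_const c).max measurable_const)
    (fun x => le_max_right _ 0) hg.pos_part fun t ht =>
      (measure_mono fun x (hx : t < max (f x - c) 0) => show c + t < f x by
        rcases lt_max_iff.1 hx with hx | hx <;> linarith).trans (hc t ht).1
  have hneg := cheegerConst_sq_mul_integral_sq_le_of_levelSets hK
    ((hm.sub_const c).neg.max measurable_const)
    (fun x => le_max_right _ 0) hg.neg_part fun t ht =>
      (measure_mono fun x (hx : t < max (-(f x - c)) 0) => show f x < c - t by
        rcases lt_max_iff.1 hx with hx | hx <;> linarith).trans (hc t ht).2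
  simp only [Pi.neg_apply] at hneg
  have hsplit : ∫ x, (f x - c) ^ 2 ∂m
      = ∫ x, max (f x - c) 0 ^ 2 ∂m + ∫ x, max (-(f x - c)) 0 ^ 2 ∂m := by
    rw [← integral_add hg.pos_part.integrable_sq hg.neg_part.integrable_sq]
    congr 1 with x
    rcases le_total (f x - c) 0 with hx | hx
    · rw [max_eq_right hx, max_eq_left (neg_nonneg.2 hx)]; ring
    · rw [max_eq_left hx, max_eq_right (neg_nonpos.2 hx)]; ring
  calc cheegerConst K m ^ 2 * ∫ x, (f x - c) ^ 2 ∂m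
      ≤ 2 * (dirichletEnergy2 K m (fun x => max (f x - c) 0)
          + dirichletEnergy2 K m (fun x => max (-(f x - c)) 0)) := by
        rw [hsplit]; linarith
    _ ≤ 2 * dirichletEnergy2 K m f := by
        rw [← dirichletEnergy2_sub_const f c]
        gcongr
        exact dirichletEnergy2_max_zero_add_le hK hg

lemma cheegerConst_sq_mul_integral_sq_le [IsFiniteMeasure m] [IsMarkovKernel K]
    (hK : K.IsReversible m) {f : X → ℝ} (hm : Measurable f) (hL2 : MemLp f 2 m)
    (h0 : ∫ x, f x ∂m = 0) :
    cheegerConst K m ^ 2 * ∫ x, f x ^ 2 ∂m ≤ 2 * dirichletEnergy2 K m f := by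
  obtain ⟨c, hc⟩ := exists_median (μ := m) hm
  calc cheegerConst K m ^ 2 * ∫ x, f x ^ 2 ∂m
      ≤ cheegerConst K m ^ 2 * ∫ x, (f x - c) ^ 2 ∂m := by
        gcongr ?_ * ?_; exact integral_sq_le_integral_sub_const_sq hL2 h0 c
    _ ≤ 2 * dirichletEnergy2 K m f := cheegerConst_sq_mul_integral_sub_sq_le hK hm hL2 hc

/-- Needed because `sInf ∅ = 0` in `ℝ`. -/
lemma cheegerRatios_nonempty_iff [IsFiniteMeasure m] [IsMarkovKernel K] (hK : K.IsReversible m) :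
    (cheegerRatios K m).Nonempty ↔ (rayleighQuotients K m).Nonempty := by
  constructor
  · rintro ⟨_, A, hA, hpos, hhalf, rfl⟩
    exact ⟨_, centeredIndicator_mem_rayleighQuotients hA hpos hhalf⟩
  · rintro ⟨q, hq⟩
    obtain ⟨f, hm, hf, h0, hpos, -⟩ := exists_measurable_of_mem_rayleighQuotients hK hq
    have hne : ¬ f =ᵐ[m] 0 := fun hzero =>
      hpos.ne' (integral_eq_zero_of_ae (hzero.mono fun x hx => by simp [hx]))
    obtain ⟨A, hA, hApos, hhalf⟩ :=
      exists_measurableSet_le_half_of_integral_eq_zero hm (hf.integrable one_le_two) h0 hne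
    exact ⟨_, A, hA, hApos, hhalf, rfl⟩

lemma cheegerConst_sq_div_two_le_spectralGap [IsFiniteMeasure m] [IsMarkovKernel K]
    (hK : K.IsReversible m) : cheegerConst K m ^ 2 / 2 ≤ spectralGap K m := by
  rcases (rayleighQuotients K m).eq_empty_or_nonempty with hempty | hne
  · have hκ : cheegerRatios K m = ∅ := by
      rwa [← not_nonempty_iff_eq_empty, cheegerRatios_nonempty_iff hK, not_nonempty_iff_eq_empty]
    simp [cheegerConst_eq_sInf, spectralGap_eq_sInf, hempty, hκ]
  refine le_csInf hne fun q hq => ?_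
  obtain ⟨f, hm, hf, h0, hpos, rfl⟩ := exists_measurable_of_mem_rayleighQuotients hK hq
  rw [le_div_iff₀ hpos]
  linarith [cheegerConst_sq_mul_integral_sq_le hK hm hf h0]

lemma spectralGap_le_two_mul_cheegerConst [IsFiniteMeasure m] [IsMarkovKernel K]
    (hK : K.IsReversible m) : spectralGap K m ≤ 2 * cheegerConst K m := by
  rcases (cheegerRatios K m).eq_empty_or_nonempty with hempty | hne
  · have hgap : rayleighQuotients K m = ∅ := by
      rwa [← not_nonempty_iff_eq_empty, ← cheegerRatios_nonempty_iff hK, not_nonempty_iff_eq_empty]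
    simp [cheegerConst_eq_sInf, spectralGap_eq_sInf, hempty, hgap]
  have : spectralGap K m / 2 ≤ cheegerConst K m := by
    refine le_csInf hne ?_
    rintro _ ⟨A, hA, hpos, hhalf, rfl⟩
    linarith [spectralGap_le_two_mul_boundarySize_div hK hA hpos hhalf]
  linarith

end

/-- **Theorem A.** Let `Π` be a reversible Markov kernel on `X` with finite
reversing measure `m`, `κ` its Cheeger constant and `1 − λ₂` the infimum of the Rayleigh
quotients of the associated Laplacian on zero-average functions. Then
`κ²/2 ≤ 1 − λ₂ ≤ 2κ`. -/
theorem cheeger_inequalities {X : Type*} [MeasurableSpace X]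
    (K : Kernel X X) [IsMarkovKernel K] (m : Measure X) [IsFiniteMeasure m]
    (hrev : ∀ f g : X → ℝ, Measurable f → Measurable g →
      (∃ C, ∀ x, |f x| ≤ C) → (∃ C, ∀ x, |g x| ≤ C) →
      ∫ x, f x * (∫ y, g y ∂(K x)) ∂m = ∫ x, (∫ y, f y ∂(K x)) * g x ∂m) :
    cheegerConst K m ^ 2 / 2 ≤ spectralGap K m ∧ spectralGap K m ≤ 2 * cheegerConst K m := by
  have hK : K.IsReversible m := Kernel.isReversible_of_integral_mul_comm hrev
  exact ⟨cheegerConst_sq_div_two_le_spectralGap hK, spectralGap_le_two_mul_cheegerConst hK⟩
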